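/- Let Θ ⊆ ℝ^p be a convex set, let f : ℝ^p → ℝ be ρ-weakly convex and L-Lipschitz on Θ, and let ρ̂ > ρ > 0. Let G : ℝ^p → ℝ^p be L₁-Lipschitz on Θ with ‖G(θ)‖ ≤ L for all θ ∈ Θ. Let θ₁, θ₂ ∈ Θ and suppose θ̂₁, θ̂₂ ∈ Θ are minimizers over Θ of θ' ↦ f(θ') + (ρ̂/2)‖θ' − θ₁‖² and θ' ↦ f(θ') + (ρ̂/2)‖θ' − θ₂‖², respectively. Then |⟨θ̂₁ − θ₁, G(θ₁)⟩ − ⟨θ̂₂ − θ₂, G(θ₂)⟩| ≤ (2L(L₁ + ρ̂)/(ρ̂ − ρ)) ‖θ₁ − θ₂‖. -/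

import Mathlib

/-!
The proximal objective `f + ρ̂/2 ‖· - θᵢ‖²` is `(ρ̂ - ρ)`-strongly convex, so it grows at least
quadratically away from its minimizer `θ̂ᵢ` over `Θ`. Adding these growth inequalities for the two
minimizers, the values of `f` cancel and
`(ρ̂ - ρ) ‖θ̂₁ - θ̂₂‖² ≤ ρ̂ ⟪θ̂₁ - θ̂₂, θ₁ - θ₂⟫`, whence `(ρ̂ - ρ) ‖θ̂₁ - θ̂₂‖ ≤ ρ̂ ‖θ₁ - θ₂‖`.
Comparing the objective at `θ̂₂` with its value at `θ₂` and using the Lipschitz bound on `f`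
gives `ρ̂ ‖θ̂₂ - θ₂‖ ≤ 2L`. The claim follows by splitting the difference of inner products as
`⟪(θ̂₁ - θ₁) - (θ̂₂ - θ₂), G θ₁⟫ + ⟪θ̂₂ - θ₂, G θ₁ - G θ₂⟫`.
-/

open scoped InnerProductSpace
open Set Filter Topology

variable {E : Type*} [NormedAddCommGroup E] {s : Set E} {f : E → ℝ}

theorem mul_norm_sub_le_two_mul_of_isMinOn {c L : ℝ} {v x : E} (hv : v ∈ s)
    (hmin : IsMinOn (fun y => f y + c / 2 * ‖y - v‖ ^ 2) s x) (hL : 0 ≤ L)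
    (hf : f v - f x ≤ L * ‖x - v‖) :
    c * ‖x - v‖ ≤ 2 * L := by
  have h := isMinOn_iff.1 hmin v hv
  rw [sub_self, norm_zero] at h
  rcases (norm_nonneg (x - v)).eq_or_lt with hd | hd
  · rw [← hd, mul_zero]
    positivity
  · nlinarith

section InnerProductSpace

variable [InnerProductSpace ℝ E]

theorem StrongConvexOn.add_sq_norm_sub_le_of_isMinOn {m : ℝ} {x y : E}
    (hf : StrongConvexOn s m f) (hmin : IsMinOn f s x) (hx : x ∈ s) (hy : y ∈ s) :
    f x + m / 2 * ‖y - x‖ ^ 2 ≤ f y := by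
  have hseg : ∀ t ∈ Ioo (0 : ℝ) 1, f x + (1 - t) * (m / 2 * ‖y - x‖ ^ 2) ≤ f y := by
    rintro t ⟨ht0, ht1⟩
    have hconv := hf.2 hx hy (sub_nonneg.2 ht1.le) ht0.le (sub_add_cancel 1 t)
    have hle := isMinOn_iff.1 hmin _ (hf.1 hx hy (sub_nonneg.2 ht1.le) ht0.le (sub_add_cancel 1 t))
    rw [smul_eq_mul, smul_eq_mul, norm_sub_rev x y] at hconv
    have hscaled : t * (f x + (1 - t) * (m / 2 * ‖y - x‖ ^ 2)) ≤ t * f y := by linarith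
    exact le_of_mul_le_mul_left hscaled ht0
  have hlim : Tendsto (fun t : ℝ => f x + (1 - t) * (m / 2 * ‖y - x‖ ^ 2)) (𝓝[>] 0)
      (𝓝 (f x + (1 - 0) * (m / 2 * ‖y - x‖ ^ 2))) :=
    (Continuous.tendsto (by fun_prop) 0).mono_left nhdsWithin_le_nhds
  simpa using le_of_tendsto hlim (eventually_of_mem (Ioo_mem_nhdsGT one_pos) hseg)

theorem strongConvexOn_add_sq_norm_sub {ρ c : ℝ} (hs : Convex ℝ s)
    (hf : ConvexOn ℝ univ fun x => f x + ρ / 2 * ‖x‖ ^ 2) (v : E) :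
    StrongConvexOn s (c - ρ) fun x => f x + c / 2 * ‖x - v‖ ^ 2 := by
  rw [strongConvexOn_iff_convex]
  have hexpand : (fun x => f x + c / 2 * ‖x - v‖ ^ 2 - (c - ρ) / 2 * ‖x‖ ^ 2) =
      fun x => (f x + ρ / 2 * ‖x‖ ^ 2) + ((-c) • innerₛₗ ℝ v x + c / 2 * ‖v‖ ^ 2) := by
    funext x
    simp only [norm_sub_sq_real, innerₛₗ_apply_apply, smul_eq_mul, real_inner_comm v x]
    ring
  rw [hexpand]
  exact (hf.subset (subset_univ s) hs).add (((-c) • innerₛₗ ℝ v).convexOn hs |>.add_const _)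

theorem mul_norm_sub_le_mul_norm_sub_of_isMinOn {ρ c : ℝ} (hs : Convex ℝ s)
    (hf : ConvexOn ℝ univ fun x => f x + ρ / 2 * ‖x‖ ^ 2) (hc : 0 ≤ c) {v₁ v₂ x₁ x₂ : E}
    (hx₁ : x₁ ∈ s) (hx₂ : x₂ ∈ s)
    (hmin₁ : IsMinOn (fun x => f x + c / 2 * ‖x - v₁‖ ^ 2) s x₁)
    (hmin₂ : IsMinOn (fun x => f x + c / 2 * ‖x - v₂‖ ^ 2) s x₂) :
    (c - ρ) * ‖x₁ - x₂‖ ≤ c * ‖v₁ - v₂‖ := by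
  have h₁ := (strongConvexOn_add_sq_norm_sub hs hf v₁).add_sq_norm_sub_le_of_isMinOn hmin₁ hx₁ hx₂
  have h₂ := (strongConvexOn_add_sq_norm_sub hs hf v₂).add_sq_norm_sub_le_of_isMinOn hmin₂ hx₂ hx₁
  rw [norm_sub_rev x₂] at h₁
  have hquad : ‖x₂ - v₁‖ ^ 2 + ‖x₁ - v₂‖ ^ 2 - ‖x₁ - v₁‖ ^ 2 - ‖x₂ - v₂‖ ^ 2 =
      2 * ⟪x₁ - x₂, v₁ - v₂⟫_ℝ := by
    simp only [norm_sub_sq_real, inner_sub_left, inner_sub_right]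
    ring
  have hcs := mul_le_mul_of_nonneg_left (real_inner_le_norm (x₁ - x₂) (v₁ - v₂)) hc
  have hsq : (c - ρ) * ‖x₁ - x₂‖ ^ 2 ≤ c * (‖x₁ - x₂‖ * ‖v₁ - v₂‖) := by
    linear_combination h₁ + h₂ + c / 2 * hquad + hcs
  rcases (norm_nonneg (x₁ - x₂)).eq_or_lt with hd | hd
  · rw [← hd, mul_zero]
    positivity
  · nlinarith

theorem abs_inner_sub_inner_le (a b u w : E) :
    |⟪a, u⟫_ℝ - ⟪b, w⟫_ℝ| ≤ ‖a - b‖ * ‖u‖ + ‖b‖ * ‖u - w‖ := by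
  have hsplit : ⟪a, u⟫_ℝ - ⟪b, w⟫_ℝ = ⟪a - b, u⟫_ℝ + ⟪b, u - w⟫_ℝ := by
    simp only [inner_sub_left, inner_sub_right]
    ring
  rw [hsplit]
  exact (abs_add_le _ _).trans
    (add_le_add (abs_real_inner_le_norm _ _) (abs_real_inner_le_norm _ _))

end InnerProductSpace

/-- If `f` is `ρ`-weakly convex and `L`-Lipschitz on the convex set `Θ`,
`ρ̂ > ρ > 0`, `G` is `L₁`-Lipschitz on `Θ` with `‖G θ‖ ≤ L` on `Θ`, and `θ̂₁, θ̂₂ ∈ Θ` are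
proximal points of `θ₁, θ₂ ∈ Θ` with parameter `ρ̂`, then
`|⟨θ̂₁ − θ₁, G θ₁⟩ − ⟨θ̂₂ − θ₂, G θ₂⟩| ≤ (2L(L₁ + ρ̂)/(ρ̂ − ρ))‖θ₁ − θ₂‖`. -/
theorem stmt13 (p : ℕ) (Θ : Set (EuclideanSpace ℝ (Fin p))) (hΘ : Convex ℝ Θ)
    (f : EuclideanSpace ℝ (Fin p) → ℝ) (ρ ρh L L₁ : ℝ) (hρ : 0 < ρ) (hρh : ρ < ρh)
    (hwc : ConvexOn ℝ Set.univ (fun x => f x + (ρ / 2) * ‖x‖ ^ 2))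
    (hflip : ∀ x ∈ Θ, ∀ y ∈ Θ, |f x - f y| ≤ L * ‖x - y‖)
    (G : EuclideanSpace ℝ (Fin p) → EuclideanSpace ℝ (Fin p))
    (hGlip : ∀ x ∈ Θ, ∀ y ∈ Θ, ‖G x - G y‖ ≤ L₁ * ‖x - y‖)
    (hGbdd : ∀ x ∈ Θ, ‖G x‖ ≤ L)
    (θ₁ θ₂ : EuclideanSpace ℝ (Fin p)) (hθ₁ : θ₁ ∈ Θ) (hθ₂ : θ₂ ∈ Θ)
    (θhat₁ θhat₂ : EuclideanSpace ℝ (Fin p)) (hmem₁ : θhat₁ ∈ Θ) (hmem₂ : θhat₂ ∈ Θ)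
    (hmin₁ : ∀ θ' ∈ Θ,
      f θhat₁ + (ρh / 2) * ‖θhat₁ - θ₁‖ ^ 2 ≤ f θ' + (ρh / 2) * ‖θ' - θ₁‖ ^ 2)
    (hmin₂ : ∀ θ' ∈ Θ,
      f θhat₂ + (ρh / 2) * ‖θhat₂ - θ₂‖ ^ 2 ≤ f θ' + (ρh / 2) * ‖θ' - θ₂‖ ^ 2) :
    |⟪θhat₁ - θ₁, G θ₁⟫_ℝ - ⟪θhat₂ - θ₂, G θ₂⟫_ℝ| ≤
      (2 * L * (L₁ + ρh) / (ρh - ρ)) * ‖θ₁ - θ₂‖ := by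
  have hμ : 0 < ρh - ρ := sub_pos.2 hρh
  have hL : 0 ≤ L := (norm_nonneg _).trans (hGbdd θ₁ hθ₁)
  have hhat : (ρh - ρ) * ‖θhat₁ - θhat₂‖ ≤ ρh * ‖θ₁ - θ₂‖ :=
    mul_norm_sub_le_mul_norm_sub_of_isMinOn hΘ hwc (hρ.trans hρh).le hmem₁ hmem₂
      (isMinOn_iff.2 hmin₁) (isMinOn_iff.2 hmin₂)
  have hshrink : (ρh - ρ) * ‖θhat₂ - θ₂‖ ≤ 2 * L :=
    (mul_le_mul_of_nonneg_right (by linarith) (norm_nonneg _)).trans <|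
      mul_norm_sub_le_two_mul_of_isMinOn hθ₂ (isMinOn_iff.2 hmin₂) hL <|
        (le_abs_self _).trans (by simpa only [norm_sub_rev θ₂] using hflip θ₂ hθ₂ θhat₂ hmem₂)
  have hbound : |⟪θhat₁ - θ₁, G θ₁⟫_ℝ - ⟪θhat₂ - θ₂, G θ₂⟫_ℝ| ≤
      (‖θhat₁ - θhat₂‖ + ‖θ₁ - θ₂‖) * L + ‖θhat₂ - θ₂‖ * (L₁ * ‖θ₁ - θ₂‖) := by
    refine (abs_inner_sub_inner_le _ _ _ _).trans (add_le_add ?_ ?_)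
    · rw [sub_sub_sub_comm]
      exact mul_le_mul (norm_sub_le _ _) (hGbdd θ₁ hθ₁) (norm_nonneg _) (by positivity)
    · exact mul_le_mul_of_nonneg_left (hGlip θ₁ hθ₁ θ₂ hθ₂) (norm_nonneg _)
  have hL₁ : 0 ≤ L₁ * ‖θ₁ - θ₂‖ := (norm_nonneg _).trans (hGlip θ₁ hθ₁ θ₂ hθ₂)
  rw [div_mul_eq_mul_div, le_div_iff₀ hμ]
  calc |⟪θhat₁ - θ₁, G θ₁⟫_ℝ - ⟪θhat₂ - θ₂, G θ₂⟫_ℝ| * (ρh - ρ)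
      ≤ ((‖θhat₁ - θhat₂‖ + ‖θ₁ - θ₂‖) * L + ‖θhat₂ - θ₂‖ * (L₁ * ‖θ₁ - θ₂‖)) * (ρh - ρ) :=
        mul_le_mul_of_nonneg_right hbound hμ.le
    _ = L * ((ρh - ρ) * ‖θhat₁ - θhat₂‖) + (ρh - ρ) * (‖θ₁ - θ₂‖ * L)
          + (ρh - ρ) * ‖θhat₂ - θ₂‖ * (L₁ * ‖θ₁ - θ₂‖) := by ring
    _ ≤ L * (ρh * ‖θ₁ - θ₂‖) + ρh * (‖θ₁ - θ₂‖ * L) + 2 * L * (L₁ * ‖θ₁ - θ₂‖) := by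
        gcongr
        linarith
    _ = 2 * L * (L₁ + ρh) * ‖θ₁ - θ₂‖ := by ring
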